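/- arXiv:2008.06736 — 2 statements merged into one kernel-verified Lean document; each statement's English description precedes it below -/
import Mathlib

section
/- In the setting of the one-dimensional sandwich theorem for averaged gradient descent on an α-strongly convex, β-smooth f: ℝ → ℝ with minimizer x_* > 0 (with 1/(2β−α) < η < 1/β, 0 < γ < η/(η(β−α)+1), λ₁ = 1/γ − 1/η + β − α, λ₂ = 1/γ − 1/η + α − β): the sequences u_k, ũ_k, v_k, ṽ_k, x̂_{k,λ₁}, x̂_{k,λ₂} all converge as k → ∞. Moreover, letting m = (x̂_{∞,λ₂} + x̂_{∞,λ₁})/2, d = (x̂_{∞,λ₂} − x̂_{∞,λ₁})/2 and C = max{1 − γ(α+λ₁), 1 − γ(α+λ₂), γ/η} ∈ (0,1), there exists a constant M > 0 such that for all k, |x̃_k − m| ≤ |d| + M C^k. -/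
open Filter
set_option maxHeartbeats 1000000

lemma step_contract (h : ℝ → ℝ) (a bb γ ρ : ℝ) (hγ : 0 < γ)
    (hmono : ∀ x y, a*(x-y)^2 ≤ (h x - h y)*(x-y))
    (hsm : ∀ x y, (h x - h y)*(x-y) ≤ bb*(x-y)^2)
    (hρ1 : |1 - γ*a| ≤ ρ) (hρ2 : |1 - γ*bb| ≤ ρ) :
    ∀ x y, |(x - γ * h x) - (y - γ * h y)| ≤ ρ * |x - y| := by
  intro x y
  rcases eq_or_ne x y with rfl | hne
  · simp
  have h1 := hmono x y
  have h2 := hsm x y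
  have e1 : 1 - γ*a ≤ |1 - γ*a| := le_abs_self _
  have e2 : -|1 - γ*a| ≤ 1 - γ*a := neg_abs_le _
  have e3 : 1 - γ*bb ≤ |1 - γ*bb| := le_abs_self _
  have e4 : -|1 - γ*bb| ≤ 1 - γ*bb := neg_abs_le _
  rcases lt_or_gt_of_ne (sub_ne_zero.mpr hne) with hs | hs
  · -- x - y < 0
    have hd1 : h x - h y ≤ a * (x - y) := by nlinarith
    have hd2 : bb * (x - y) ≤ h x - h y := by nlinarith
    rw [abs_of_neg hs, abs_le]
    constructor <;> nlinarith
  · have hd1 : a * (x - y) ≤ h x - h y := by nlinarith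
    have hd2 : h x - h y ≤ bb * (x - y) := by nlinarith
    rw [abs_of_pos hs, abs_le]
    constructor <;> nlinarith

lemma contract_path (h : ℝ → ℝ) (a bb γ ρ : ℝ) (ha : 0 < a) (hγ : 0 < γ)
    (hmono : ∀ x y, a*(x-y)^2 ≤ (h x - h y)*(x-y))
    (hsm : ∀ x y, (h x - h y)*(x-y) ≤ bb*(x-y)^2)
    (hρ1 : |1 - γ*a| ≤ ρ) (hρ2 : |1 - γ*bb| ≤ ρ) (hρ : ρ < 1)
    (z : ℕ → ℝ) (hz : ∀ k, z (k+1) = z k - γ * h (z k)) :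
    ∃ L, Tendsto z atTop (nhds L) ∧ h L = 0 := by
  have hstep := step_contract h a bb γ ρ hγ hmono hsm hρ1 hρ2
  have hρ0 : 0 ≤ ρ := le_trans (abs_nonneg _) hρ1
  -- h is Lipschitz hence continuous
  have hbb : 0 < bb := by nlinarith [hmono 1 0, hsm 1 0]
  have hlip : ∀ x y, |h x - h y| ≤ bb * |x - y| := by
    intro x y
    rcases eq_or_ne x y with rfl | hne
    · simp
    have h1 := hmono x y
    have h2 := hsm x y
    have habs : |h x - h y| * |x - y| = (h x - h y) * (x - y) := by
      rw [← abs_mul, abs_of_nonneg]; nlinarith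
    have hxy : 0 < |x - y| := abs_pos.mpr (sub_ne_zero.mpr hne)
    have : |h x - h y| * |x - y| ≤ bb * |x - y| * |x - y| := by
      rw [habs]
      calc (h x - h y) * (x - y) ≤ bb * (x-y)^2 := h2
        _ = bb * |x-y| * |x-y| := by rw [mul_assoc, abs_mul_abs_self, sq]
    exact le_of_mul_le_mul_right this hxy
  have hcont : Continuous h := by
    apply LipschitzWith.continuous (K := Real.toNNReal bb)
    apply LipschitzWith.of_dist_le_mul
    intro x y
    simpa [Real.dist_eq, Real.coe_toNNReal _ hbb.le] using hlip x y
  have hgeo : ∀ k, dist (z k) (z (k+1)) ≤ dist (z 0) (z 1) * ρ ^ k := by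
    intro k
    induction k with
    | zero => simp
    | succ n ih =>
      have : dist (z (n+1)) (z (n+2)) ≤ ρ * dist (z n) (z (n+1)) := by
        have key := hstep (z (n+1)) (z n)
        rw [← hz (n+1), ← hz n] at key
        calc dist (z (n+1)) (z (n+2)) = |z (n+2) - z (n+1)| := by rw [dist_comm, Real.dist_eq]
          _ ≤ ρ * |z (n+1) - z n| := key
          _ = ρ * dist (z n) (z (n+1)) := by rw [dist_comm, Real.dist_eq]
      calc dist (z (n+1)) (z (n+2)) ≤ ρ * dist (z n) (z (n+1)) := this
        _ ≤ ρ * (dist (z 0) (z 1) * ρ ^ n) := by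
            exact mul_le_mul_of_nonneg_left ih hρ0
        _ = dist (z 0) (z 1) * ρ ^ (n+1) := by ring
  have hcauchy : CauchySeq z := cauchySeq_of_le_geometric ρ (dist (z 0) (z 1)) hρ hgeo
  obtain ⟨L, hL⟩ := cauchySeq_tendsto_of_complete hcauchy
  refine ⟨L, hL, ?_⟩
  have h1 : Tendsto (fun k => z (k+1)) atTop (nhds L) :=
    hL.comp (tendsto_add_atTop_nat 1)
  have h2 : Tendsto (fun k => z k - γ * h (z k)) atTop (nhds (L - γ * h L)) :=
    hL.sub ((tendsto_const_nhds.mul ((hcont.tendsto L).comp hL)))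
  have h3 : Tendsto (fun k => z (k+1)) atTop (nhds (L - γ * h L)) := by
    simpa only [hz] using h2
  have := tendsto_nhds_unique h1 h3
  have : γ * h L = 0 := by linarith
  rcases mul_eq_zero.mp this with h' | h'
  · exact absurd h' (ne_of_gt hγ)
  · exact h'

lemma avg_summable (q : ℝ) (hq0 : 0 ≤ q) (hq1 : q < 1) (w : ℕ → ℝ) (B : ℝ)
    (hw : ∀ i, |w i| ≤ B) : Summable (fun i => (1-q)*q^i * w i) := by
  apply Summable.of_abs
  apply Summable.of_nonneg_of_le (fun i => abs_nonneg _)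
    (f := fun i => ((1-q)*B) * q^i)
  · intro i
    rw [abs_mul, abs_mul, abs_of_nonneg (by linarith : (0:ℝ) ≤ 1-q),
      abs_of_nonneg (pow_nonneg hq0 i)]
    calc (1-q) * q^i * |w i| ≤ (1-q) * q^i * B :=
          mul_le_mul_of_nonneg_left (hw i)
            (mul_nonneg (by linarith) (pow_nonneg hq0 i))
      _ = (1-q)*B * q^i := by ring
  · exact (summable_geometric_of_lt_one hq0 hq1).mul_left _

lemma avg_bound (q : ℝ) (hq0 : 0 < q) (hq1 : q < 1) (w : ℕ → ℝ) (B : ℝ)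
    (hw : ∀ i, |w i| ≤ B) :
    ∀ k, |(1 - q^(k+1))⁻¹ * (∑ i ∈ Finset.range (k+1), (1-q)*q^i * w i) -
      ∑' i, (1-q)*q^i * w i| ≤ (2*B*(1-q)⁻¹) * q^(k+1) := by
  intro k
  have hB : 0 ≤ B := le_trans (abs_nonneg _) (hw 0)
  have h1q : (0:ℝ) < 1 - q := by linarith
  have hsum := avg_summable q hq0.le hq1 w B hw
  have habs : Summable (fun i => |(1-q)*q^i * w i|) := hsum.abs
  set S := ∑' i, (1-q)*q^i * w i with hS
  set Sk := ∑ i ∈ Finset.range (k+1), (1-q)*q^i * w i with hSk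
  -- tail bound
  have htail : |Sk - S| ≤ B * q^(k+1) := by
    have h0 := Summable.sum_add_tsum_nat_add (f := fun i => (1-q)*q^i * w i) (k+1) hsum
    have : Sk - S = -(∑' i, (1-q)*q^(i+(k+1)) * w (i+(k+1))) := by
      rw [hSk, hS]; linear_combination h0
    rw [this, abs_neg]
    have habs' : Summable (fun i => |(1-q)*q^(i+(k+1)) * w (i+(k+1))|) :=
      (summable_nat_add_iff (f := fun i => |(1-q)*q^i * w i|) (k+1)).mpr habs
    have hle : |∑' i, (1-q)*q^(i+(k+1)) * w (i+(k+1))| ≤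
        ∑' i, |(1-q)*q^(i+(k+1)) * w (i+(k+1))| := by
      have := norm_tsum_le_tsum_norm (f := fun i => (1-q)*q^(i+(k+1)) * w (i+(k+1)))
        (by simp only [Real.norm_eq_abs]; exact habs')
      simpa only [Real.norm_eq_abs] using this
    refine hle.trans ?_
    have hb : ∀ i, |(1-q)*q^(i+(k+1)) * w (i+(k+1))| ≤ ((1-q)*B*q^(k+1)) * q^i := by
      intro i
      rw [abs_mul, abs_mul, abs_of_nonneg h1q.le, abs_of_nonneg (pow_nonneg hq0.le _)]
      calc (1-q) * q^(i+(k+1)) * |w (i+(k+1))| ≤ (1-q) * q^(i+(k+1)) * B :=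
            mul_le_mul_of_nonneg_left (hw _) (by positivity)
        _ = ((1-q)*B*q^(k+1)) * q^i := by rw [pow_add]; ring
    calc ∑' i, |(1-q)*q^(i+(k+1)) * w (i+(k+1))|
        ≤ ∑' i, ((1-q)*B*q^(k+1)) * q^i := by
          exact Summable.tsum_le_tsum hb habs'
            ((summable_geometric_of_lt_one hq0.le hq1).mul_left _)
      _ = ((1-q)*B*q^(k+1)) * (1-q)⁻¹ := by
          rw [tsum_mul_left, tsum_geometric_of_lt_one hq0.le hq1]
      _ = B * q^(k+1) := by field_simp
  have hSle : |S| ≤ B := by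
    have hle : |S| ≤ ∑' i, |(1-q)*q^i * w i| := by
      have := norm_tsum_le_tsum_norm (f := fun i => (1-q)*q^i * w i)
        (by simp only [Real.norm_eq_abs]; exact habs)
      simpa only [Real.norm_eq_abs] using this
    refine hle.trans ?_
    have hb : ∀ i, |(1-q)*q^i * w i| ≤ ((1-q)*B) * q^i := by
      intro i
      rw [abs_mul, abs_mul, abs_of_nonneg h1q.le, abs_of_nonneg (pow_nonneg hq0.le _)]
      calc (1-q) * q^i * |w i| ≤ (1-q) * q^i * B :=
            mul_le_mul_of_nonneg_left (hw _) (by positivity)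
        _ = ((1-q)*B) * q^i := by ring
    calc ∑' i, |(1-q)*q^i * w i| ≤ ∑' i, ((1-q)*B) * q^i :=
          Summable.tsum_le_tsum hb habs ((summable_geometric_of_lt_one hq0.le hq1).mul_left _)
      _ = ((1-q)*B) * (1-q)⁻¹ := by
          rw [tsum_mul_left, tsum_geometric_of_lt_one hq0.le hq1]
      _ = B := by field_simp
  have hqk : q^(k+1) ≤ q := by
    calc q^(k+1) ≤ q^1 := pow_le_pow_of_le_one hq0.le hq1.le (by omega)
      _ = q := pow_one q
  have hPk : (0:ℝ) < 1 - q^(k+1) := by linarith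
  have hPkinv : (1 - q^(k+1))⁻¹ ≤ (1-q)⁻¹ := by
    apply inv_anti₀ h1q; linarith
  have hkey : (1 - q^(k+1))⁻¹ * Sk - S = (1 - q^(k+1))⁻¹ * ((Sk - S) + q^(k+1) * S) := by
    field_simp
    ring
  rw [hkey, abs_mul, abs_of_nonneg (le_of_lt (inv_pos.mpr hPk))]
  calc (1 - q^(k+1))⁻¹ * |Sk - S + q^(k+1) * S|
      ≤ (1-q)⁻¹ * (|Sk - S| + q^(k+1) * |S|) := by
        apply mul_le_mul hPkinv ?_ (abs_nonneg _) (by positivity)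
        refine (abs_add_le _ _).trans ?_
        rw [abs_mul, abs_of_nonneg (pow_nonneg hq0.le _)]
    _ ≤ (1-q)⁻¹ * (B * q^(k+1) + q^(k+1) * B) := by
        apply mul_le_mul_of_nonneg_left ?_ (by positivity)
        have := mul_le_mul_of_nonneg_left hSle (pow_nonneg hq0.le (k+1))
        linarith
    _ = (2*B*(1-q)⁻¹) * q^(k+1) := by ring

lemma lip_of_bounds (φ : ℝ → ℝ) (α β : ℝ) (hα : 0 ≤ α)
    (hc : ∀ z w, α*(z-w)^2 ≤ (φ z - φ w)*(z-w))
    (hs : ∀ z w, (φ z - φ w)*(z-w) ≤ β*(z-w)^2) :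
    ∀ z w, |φ z - φ w| ≤ β*|z-w| := by
  intro z w
  rcases eq_or_ne z w with rfl | hne
  · simp
  have h1 := hc z w
  have h2 := hs z w
  have hzw : 0 < |z - w| := abs_pos.mpr (sub_ne_zero.mpr hne)
  have habs : |φ z - φ w| * |z - w| = (φ z - φ w) * (z - w) := by
    rw [← abs_mul, abs_of_nonneg]; nlinarith
  have : |φ z - φ w| * |z - w| ≤ β * |z-w| * |z - w| := by
    rw [habs]
    calc (φ z - φ w) * (z - w) ≤ β * (z-w)^2 := h2
      _ = β * |z-w| * |z-w| := by rw [mul_assoc, abs_mul_abs_self, sq]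
  exact le_of_mul_le_mul_right this hzw

lemma sandwich_tsum (W y : ℕ → ℝ) (hW : ∀ i, 0 ≤ W i) (hWs : Summable W)
    (hW1 : ∑' i, W i = 1) (hy0 : ∀ i, 0 ≤ y i) (By : ℝ) (hyB : ∀ i, y i ≤ By)
    (φ : ℝ → ℝ) (α β : ℝ) (hα : 0 ≤ α) (hαβ : α ≤ β)
    (hc : ∀ z w, α*(z-w)^2 ≤ (φ z - φ w)*(z-w))
    (hs : ∀ z w, (φ z - φ w)*(z-w) ≤ β*(z-w)^2) :
    |φ (∑' i, W i * y i) - ∑' i, W i * φ (y i)| ≤ (β - α) * (∑' i, W i * y i) := by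
  have hlip := lip_of_bounds φ α β hα hc hs
  set Y := ∑' i, W i * y i with hY
  have hsy : Summable (fun i => W i * y i) := by
    apply Summable.of_nonneg_of_le (fun i => mul_nonneg (hW i) (hy0 i))
      (fun i => mul_le_mul_of_nonneg_left (hyB i) (hW i)) (hWs.mul_right By)
  have hY0 : 0 ≤ Y := tsum_nonneg (fun i => mul_nonneg (hW i) (hy0 i))
  -- bound on φ (y i)
  set K := |φ 0| + β * By with hK
  have hφb : ∀ i, |φ (y i)| ≤ K := by
    intro i
    have := hlip (y i) 0
    have h2 : |φ (y i)| - |φ 0| ≤ |φ (y i) - φ 0| := by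
      exact abs_sub_abs_le_abs_sub _ _
    have h3 : |y i - 0| ≤ By := by
      rw [sub_zero, abs_of_nonneg (hy0 i)]; exact hyB i
    have hβ0 : 0 ≤ β := le_trans hα hαβ
    nlinarith [mul_le_mul_of_nonneg_left h3 hβ0]
  have hsφ : Summable (fun i => W i * φ (y i)) := by
    apply Summable.of_abs
    apply Summable.of_nonneg_of_le (fun i => abs_nonneg _) (f := fun i => W i * K)
    · intro i
      rw [abs_mul, abs_of_nonneg (hW i)]
      exact mul_le_mul_of_nonneg_left (hφb i) (hW i)
    · exact hWs.mul_right K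
  -- difference as a tsum
  have hconstsum : ∑' i, W i * φ Y = φ Y := by
    rw [tsum_mul_right, hW1, one_mul]
  have hdiff : φ Y - ∑' i, W i * φ (y i) = ∑' i, (W i * φ Y - W i * φ (y i)) := by
    rw [Summable.tsum_sub (hWs.mul_right _) hsφ, hconstsum]
  set c := (α + β)/2 with hcdef
  set d := (β - α)/2 with hddef
  have hd0 : 0 ≤ d := by rw [hddef]; linarith
  -- pointwise bounds
  have hpt : ∀ i, c*(Y - y i) - d*|Y - y i| ≤ φ Y - φ (y i) ∧
      φ Y - φ (y i) ≤ c*(Y - y i) + d*|Y - y i| := by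
    intro i
    rcases eq_or_ne Y (y i) with heq | hne
    · rw [← heq]; simp
    have h1 := hc Y (y i)
    have h2 := hs Y (y i)
    rcases (abs_cases (Y - y i)) with ⟨he, hsgn⟩ | ⟨he, hsgn⟩
    · have hpos : 0 < Y - y i := lt_of_le_of_ne hsgn (by
        intro h; exact hne (by linarith))
      rw [he, hcdef, hddef]
      constructor <;> nlinarith
    · rw [he, hcdef, hddef]
      constructor <;> nlinarith
  -- summabilities for the comparison sums
  have hby' : ∀ i, |Y - y i| ≤ Y + By := by
    intro i
    rcases abs_cases (Y - y i) with ⟨he, _⟩ | ⟨he, _⟩ <;> rw [he] <;>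
      nlinarith [hy0 i, hyB i]
  have hss : Summable (fun i => W i * (Y - y i)) := by
    have : (fun i => W i * (Y - y i)) = fun i => W i * Y - W i * y i := by
      funext i; ring
    rw [this]
    exact (hWs.mul_right Y).sub hsy
  have hsabs : Summable (fun i => W i * |Y - y i|) := by
    apply Summable.of_nonneg_of_le (fun i => mul_nonneg (hW i) (abs_nonneg _))
      (fun i => mul_le_mul_of_nonneg_left (hby' i) (hW i)) (hWs.mul_right _)
  have hsum_s : ∑' i, W i * (Y - y i) = 0 := by
    have : (fun i => W i * (Y - y i)) = fun i => W i * Y - W i * y i := by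
      funext i; ring
    rw [this, Summable.tsum_sub (hWs.mul_right Y) hsy, tsum_mul_right, hW1]
    simp [hY]
  have hsum_abs : ∑' i, W i * |Y - y i| ≤ 2 * Y := by
    calc ∑' i, W i * |Y - y i| ≤ ∑' i, (W i * Y + W i * y i) := by
          apply Summable.tsum_le_tsum ?_ hsabs ((hWs.mul_right Y).add hsy)
          intro i
          have := hby' i
          have h4 : |Y - y i| ≤ Y + y i := by
            rcases abs_cases (Y - y i) with ⟨he, _⟩ | ⟨he, _⟩ <;> rw [he] <;>
              nlinarith [hy0 i]
          nlinarith [hW i]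
      _ = Y + Y := by
          rw [Summable.tsum_add (hWs.mul_right Y) hsy, tsum_mul_right, hW1]
          simp [hY]
      _ = 2 * Y := by ring
  -- lower bound
  have hslow : Summable (fun i => c*(W i * (Y - y i)) - d*(W i * |Y - y i|)) :=
    (hss.mul_left c).sub (hsabs.mul_left d)
  have hshigh : Summable (fun i => c*(W i * (Y - y i)) + d*(W i * |Y - y i|)) :=
    (hss.mul_left c).add (hsabs.mul_left d)
  have hsdiff : Summable (fun i => W i * φ Y - W i * φ (y i)) :=
    (hWs.mul_right _).sub hsφ
  have hlow : -( (β-α) * Y) ≤ φ Y - ∑' i, W i * φ (y i) := by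
    rw [hdiff]
    have h1 : ∑' i, (c*(W i * (Y - y i)) - d*(W i * |Y - y i|)) ≤
        ∑' i, (W i * φ Y - W i * φ (y i)) := by
      apply Summable.tsum_le_tsum ?_ hslow hsdiff
      intro i
      have hp := (hpt i).1
      have := mul_le_mul_of_nonneg_left hp (hW i)
      nlinarith [this]
    have h2 : ∑' i, (c*(W i * (Y - y i)) - d*(W i * |Y - y i|)) =
        c * (∑' i, W i * (Y - y i)) - d * (∑' i, W i * |Y - y i|) := by
      rw [Summable.tsum_sub (hss.mul_left c) (hsabs.mul_left d), tsum_mul_left, tsum_mul_left]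
    rw [h2, hsum_s, mul_zero, zero_sub] at h1
    have h3 : d * (∑' i, W i * |Y - y i|) ≤ d * (2*Y) :=
      mul_le_mul_of_nonneg_left hsum_abs hd0
    have : d * (2*Y) = (β - α) * Y := by rw [hddef]; ring
    linarith
  have hhigh : φ Y - ∑' i, W i * φ (y i) ≤ (β-α) * Y := by
    rw [hdiff]
    have h1 : ∑' i, (W i * φ Y - W i * φ (y i)) ≤
        ∑' i, (c*(W i * (Y - y i)) + d*(W i * |Y - y i|)) := by
      apply Summable.tsum_le_tsum ?_ hsdiff hshigh
      intro i
      have hp := (hpt i).2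
      have := mul_le_mul_of_nonneg_left hp (hW i)
      nlinarith [this]
    have h2 : ∑' i, (c*(W i * (Y - y i)) + d*(W i * |Y - y i|)) =
        c * (∑' i, W i * (Y - y i)) + d * (∑' i, W i * |Y - y i|) := by
      rw [Summable.tsum_add (hss.mul_left c) (hsabs.mul_left d), tsum_mul_left, tsum_mul_left]
    rw [h2, hsum_s, mul_zero, zero_add] at h1
    have h3 : d * (∑' i, W i * |Y - y i|) ≤ d * (2*Y) :=
      mul_le_mul_of_nonneg_left hsum_abs hd0
    have : d * (2*Y) = (β - α) * Y := by rw [hddef]; ring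
    linarith
  rw [abs_le]
  exact ⟨hlow, hhigh⟩

lemma avg_summable' (q : ℝ) (hq0 : 0 ≤ q) (hq1 : q < 1) (w : ℕ → ℝ) (B : ℝ)
    (hw : ∀ i, |w i| ≤ B) : Summable (fun i => (1-q)*q^i * w i) := by
  apply Summable.of_abs
  apply Summable.of_nonneg_of_le (fun i => abs_nonneg _)
    (f := fun i => ((1-q)*B) * q^i)
  · intro i
    rw [abs_mul, abs_mul, abs_of_nonneg (by linarith : (0:ℝ) ≤ 1-q),
      abs_of_nonneg (pow_nonneg hq0 i)]
    calc (1-q) * q^i * |w i| ≤ (1-q) * q^i * B :=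
          mul_le_mul_of_nonneg_left (hw i)
            (mul_nonneg (by linarith) (pow_nonneg hq0 i))
      _ = (1-q)*B * q^i := by ring
  · exact (summable_geometric_of_lt_one hq0 hq1).mul_left _

lemma avg_tendsto (q : ℝ) (hq0 : 0 < q) (hq1 : q < 1) (w : ℕ → ℝ) (B : ℝ)
    (hw : ∀ i, |w i| ≤ B)
    (hb : ∀ k, |(1 - q^(k+1))⁻¹ * (∑ i ∈ Finset.range (k+1), (1-q)*q^i * w i) -
      ∑' i, (1-q)*q^i * w i| ≤ (2*B*(1-q)⁻¹) * q^(k+1)) :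
    Tendsto (fun k => (1 - q^(k+1))⁻¹ * (∑ i ∈ Finset.range (k+1), (1-q)*q^i * w i))
      atTop (nhds (∑' i, (1-q)*q^i * w i)) := by
  have hg : Tendsto (fun k : ℕ => (2*B*(1-q)⁻¹) * q^(k+1)) atTop (nhds 0) := by
    have h1 : Tendsto (fun k : ℕ => q^(k+1)) atTop (nhds 0) :=
      (tendsto_pow_atTop_nhds_zero_of_lt_one hq0.le hq1).comp (tendsto_add_atTop_nat 1)
    simpa using h1.const_mul (2*B*(1-q)⁻¹)
  have h0 : Tendsto (fun k => (1 - q^(k+1))⁻¹ *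
      (∑ i ∈ Finset.range (k+1), (1-q)*q^i * w i) - ∑' i, (1-q)*q^i * w i)
      atTop (nhds 0) := by
    apply squeeze_zero_norm ?_ hg
    intro k
    simpa [Real.norm_eq_abs] using hb k
  have := h0.add_const (∑' i, (1-q)*q^i * w i)
  simpa using this

lemma lin_rec (t c : ℝ) (ht : |t| < 1) (z : ℕ → ℝ) (hz0 : z 0 = 0)
    (hz : ∀ k, z (k+1) = t * z k + c) :
    Tendsto z atTop (nhds (c/(1-t))) ∧ ∀ k, |z k| ≤ 2*|c/(1-t)| := by
  have ht1 : (1:ℝ) - t ≠ 0 := by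
    rcases abs_lt.mp ht with ⟨h1, h2⟩; intro h; linarith
  set L := c/(1-t) with hL
  have hfix : t * L + c = L := by rw [hL]; field_simp; ring
  have hcf : ∀ k, z k = L - L * t^k := by
    intro k
    induction k with
    | zero => simp [hz0]
    | succ n ih =>
      rw [hz n, ih]
      calc t * (L - L * t^n) + c = (t*L + c) - L * t^(n+1) := by ring
        _ = L - L * t^(n+1) := by rw [hfix]
  constructor
  · rw [tendsto_congr hcf]
    have h1 : Tendsto (fun k : ℕ => t^k) atTop (nhds 0) :=
      tendsto_pow_atTop_nhds_zero_of_abs_lt_one ht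
    have := (h1.const_mul L).const_sub L
    simpa using this
  · intro k
    rw [hcf k]
    have h1 : |L * t^k| ≤ |L| := by
      rw [abs_mul, abs_pow]
      calc |L| * |t|^k ≤ |L| * 1 :=
        mul_le_mul_of_nonneg_left (pow_le_one₀ (abs_nonneg t) ht.le) (abs_nonneg L)
      _ = |L| := mul_one _
    calc |L - L*t^k| ≤ |L| + |L*t^k| := abs_sub _ _
      _ ≤ |L| + |L| := by linarith
      _ = 2*|L| := by ring

lemma geom_mul_summable (q : ℝ) (hq0 : 0 ≤ q) (hq1 : q < 1) (w : ℕ → ℝ) (B : ℝ)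
    (hw : ∀ i, |w i| ≤ B) : Summable (fun i => q^i * w i) := by
  apply Summable.of_abs
  apply Summable.of_nonneg_of_le (fun i => abs_nonneg _) (f := fun i => B * q^i)
  · intro i
    rw [abs_mul, abs_of_nonneg (pow_nonneg hq0 i)]
    calc q^i * |w i| ≤ q^i * B := mul_le_mul_of_nonneg_left (hw i) (pow_nonneg hq0 i)
      _ = B * q^i := by ring
  · exact (summable_geometric_of_lt_one hq0 hq1).mul_left _

lemma x_bounds (f : ℝ → ℝ) (α β η xstar : ℝ) (hα : 0 < α) (hη : 0 < η)
    (hηβ : η * β < 1) (hxstar : 0 < xstar)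
    (hconv : ∀ x y : ℝ, α * (x - y) ^ 2 ≤ (deriv f x - deriv f y) * (x - y))
    (hsmooth : ∀ x y : ℝ, (deriv f x - deriv f y) * (x - y) ≤ β * (x - y) ^ 2)
    (hder : deriv f xstar = 0) (x : ℕ → ℝ) (hx0 : x 0 = 0)
    (hx : ∀ k, x (k + 1) = x k - η * deriv f (x k)) :
    ∀ k, 0 ≤ x k ∧ x k ≤ xstar := by
  intro k
  induction k with
  | zero => rw [hx0]; exact ⟨le_refl 0, hxstar.le⟩
  | succ n ih =>
    obtain ⟨h0, h1⟩ := ih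
    rcases eq_or_lt_of_le h1 with heq | hlt
    · rw [hx n, heq, hder]
      constructor <;> nlinarith
    · have hc1 := hconv xstar (x n)
      rw [hder] at hc1
      have hsq : 0 < (xstar - x n)^2 := pow_pos (sub_pos.mpr hlt) 2
      have hfneg : deriv f (x n) < 0 := by nlinarith [mul_pos hα hsq]
      have hs1 := hsmooth (x n) xstar
      rw [hder] at hs1
      constructor
      · rw [hx n]; nlinarith
      · rw [hx n]
        nlinarith [mul_pos hη (mul_pos (show (0:ℝ) < 1 - η*β by linarith)
          (sub_pos.mpr hlt))]

lemma root_le (F : ℝ → ℝ) (a : ℝ) (ha : 0 < a)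
    (hmono : ∀ z w, a*(z-w)^2 ≤ (F z - F w)*(z-w))
    (L X : ℝ) (hL : F L = 0) (hX : 0 ≤ F X) : L ≤ X := by
  by_contra hcon
  push_neg at hcon
  have hm := hmono L X
  nlinarith [mul_nonneg hX (sub_pos.mpr hcon).le,
    mul_pos ha (mul_pos (sub_pos.mpr hcon) (sub_pos.mpr hcon))]

lemma le_root (F : ℝ → ℝ) (a : ℝ) (ha : 0 < a)
    (hmono : ∀ z w, a*(z-w)^2 ≤ (F z - F w)*(z-w))
    (L X : ℝ) (hL : F L = 0) (hX : F X ≤ 0) : X ≤ L := by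
  by_contra hcon
  push_neg at hcon
  have hm := hmono X L
  nlinarith [mul_nonneg (neg_nonneg.mpr hX) (sub_pos.mpr hcon).le,
    mul_pos ha (mul_pos (sub_pos.mpr hcon) (sub_pos.mpr hcon))]

/-- Theorem 5, part 2 (one-dimensional form): convergence of the comparison and
regularized paths, and the approximate ℓ2-regularization effect of the averaged path. -/
theorem averaged_gd_sandwich_convergence
    (f : ℝ → ℝ) (hdiff : Differentiable ℝ f)
    (α β : ℝ) (hα : 0 < α) (hαβ : α ≤ β)
    (hconv : ∀ x y : ℝ, α * (x - y) ^ 2 ≤ (deriv f x - deriv f y) * (x - y))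
    (hsmooth : ∀ x y : ℝ, (deriv f x - deriv f y) * (x - y) ≤ β * (x - y) ^ 2)
    (xstar : ℝ) (hmin : ∀ x, f xstar ≤ f x) (hxstar : 0 < xstar)
    (b : ℝ) (hb : b = -deriv f 0)
    (η γ : ℝ)
    (hηlb : 1 / (2 * β - α) < η) (hηub : η < 1 / β)
    (hγpos : 0 < γ) (hγub : γ < η / (η * (β - α) + 1))
    (lam₁ lam₂ : ℝ)
    (hlam₁ : lam₁ = 1 / γ - 1 / η + β - α)
    (hlam₂ : lam₂ = 1 / γ - 1 / η + α - β)
    (C : ℝ) (hC : C = max (max (1 - γ * (α + lam₁)) (1 - γ * (α + lam₂))) (γ / η))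
    (x xh₁ xh₂ u v : ℕ → ℝ)
    (hx0 : x 0 = 0) (hx : ∀ k, x (k + 1) = x k - η * deriv f (x k))
    (hxh₁0 : xh₁ 0 = 0)
    (hxh₁ : ∀ k, xh₁ (k + 1) = xh₁ k - γ * (deriv f (xh₁ k) + lam₁ * xh₁ k))
    (hxh₂0 : xh₂ 0 = 0)
    (hxh₂ : ∀ k, xh₂ (k + 1) = xh₂ k - γ * (deriv f (xh₂ k) + lam₂ * xh₂ k))
    (hu0 : u 0 = 0) (hu : ∀ k, u (k + 1) = u k - η * (α * u k - b))
    (hv0 : v 0 = 0) (hv : ∀ k, v (k + 1) = v k - η * (β * v k - b))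
    (P p : ℕ → ℝ)
    (hP : ∀ k, P k = 1 - (γ / η) ^ (k + 1))
    (hp0 : p 0 = P 0) (hps : ∀ k, p (k + 1) = P (k + 1) - P k)
    (xtil util vtil : ℕ → ℝ)
    (hxtil : ∀ k, xtil k = (P k)⁻¹ * ∑ i ∈ Finset.range (k + 1), p i * x i)
    (hutil : ∀ k, util k = (P k)⁻¹ * ∑ i ∈ Finset.range (k + 1), p i * u i)
    (hvtil : ∀ k, vtil k = (P k)⁻¹ * ∑ i ∈ Finset.range (k + 1), p i * v i) :
    0 < C ∧ C < 1 ∧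
    (∃ U Util V Vtil : ℝ,
      Filter.Tendsto u Filter.atTop (nhds U) ∧
      Filter.Tendsto util Filter.atTop (nhds Util) ∧
      Filter.Tendsto v Filter.atTop (nhds V) ∧
      Filter.Tendsto vtil Filter.atTop (nhds Vtil)) ∧
    (∃ L₁ L₂ : ℝ,
      Filter.Tendsto xh₁ Filter.atTop (nhds L₁) ∧
      Filter.Tendsto xh₂ Filter.atTop (nhds L₂) ∧
      ∃ M : ℝ, 0 < M ∧ ∀ k,
        |xtil k - (L₂ + L₁) / 2| ≤ |(L₂ - L₁) / 2| + M * C ^ k) := by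
  -- basic numeric facts
  have hβ : (0:ℝ) < β := lt_of_lt_of_le hα hαβ
  have h2βα : (0:ℝ) < 2*β - α := by linarith
  have hη : 0 < η := lt_trans (by positivity) hηlb
  have hηβ : η * β < 1 := by
    rw [lt_div_iff₀ hβ] at hηub; linarith
  have hγη : γ * (η*(β-α)+1) < η := by
    rw [lt_div_iff₀ (by nlinarith : (0:ℝ) < η*(β-α)+1)] at hγub; linarith
  have hγne : γ ≠ 0 := ne_of_gt hγpos
  have hηne : η ≠ 0 := ne_of_gt hη
  set q := γ / η with hq
  have hq0 : 0 < q := by rw [hq]; positivity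
  have h5 : γ*(β-α) + q < 1 := by
    have h' : (γ*(η*(β-α)) + γ)/η < 1 := by
      rw [div_lt_one hη]; nlinarith
    calc γ*(β-α) + q = (γ*(η*(β-α)) + γ)/η := by rw [hq]; field_simp
      _ < 1 := h'
  have hγβq : γ*β < q := by
    rw [hq, lt_div_iff₀ hη]
    nlinarith [mul_pos hγpos (show (0:ℝ) < 1 - η*β by linarith)]
  have hγα : γ*α ≤ γ*β := by nlinarith
  have hγα0 : 0 < γ*α := mul_pos hγpos hα
  have hq1 : q < 1 := by nlinarith [mul_nonneg hγpos.le (sub_nonneg.mpr hαβ)]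
  have h1q : (0:ℝ) < 1 - q := by linarith
  -- derivative facts
  have hder : deriv f xstar = 0 := by
    have h1 : IsLocalMin f xstar := Filter.Eventually.of_forall hmin
    exact h1.deriv_eq_zero
  -- P and p formulas
  have hpq : ∀ i, p i = (1-q)*q^i := by
    intro i
    cases i with
    | zero => rw [hp0, hP 0]; ring
    | succ n => rw [hps n, hP (n+1), hP n]; ring
  have hrw : ∀ (w til : ℕ → ℝ),
      (∀ k, til k = (P k)⁻¹ * ∑ i ∈ Finset.range (k+1), p i * w i) →
      ∀ k, til k = (1 - q^(k+1))⁻¹ * (∑ i ∈ Finset.range (k+1), (1-q)*q^i * w i) := by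
    intro w til h k
    rw [h k, hP k]
    congr 1
    apply Finset.sum_congr rfl
    intro i _
    rw [hpq i]
  -- u and v convergence
  have huρ : |1 - η*α| < 1 := by
    rw [abs_lt]; constructor <;> nlinarith
  have hvρ : |1 - η*β| < 1 := by
    rw [abs_lt]; constructor <;> nlinarith
  obtain ⟨hUt, hUb⟩ := lin_rec (1-η*α) (η*b) huρ u hu0 (by intro k; rw [hu k]; ring)
  obtain ⟨hVt, hVb⟩ := lin_rec (1-η*β) (η*b) hvρ v hv0 (by intro k; rw [hv k]; ring)
  have hUtilt : Tendsto util atTop (nhds (∑' i, (1-q)*q^i * u i)) := by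
    rw [tendsto_congr (hrw u util hutil)]
    exact avg_tendsto q hq0 hq1 u _ hUb (avg_bound q hq0 hq1 u _ hUb)
  have hVtilt : Tendsto vtil atTop (nhds (∑' i, (1-q)*q^i * v i)) := by
    rw [tendsto_congr (hrw v vtil hvtil)]
    exact avg_tendsto q hq0 hq1 v _ hVb (avg_bound q hq0 hq1 v _ hVb)
  -- lam computations
  have e1 : 1 - γ*(α+lam₁) = q - γ*β := by rw [hlam₁, hq]; field_simp; ring
  have e2 : 1 - γ*(β+lam₁) = q - (2*γ*β - γ*α) := by rw [hlam₁, hq]; field_simp; ring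
  have e3 : 1 - γ*(α+lam₂) = q - (2*γ*α - γ*β) := by rw [hlam₂, hq]; field_simp; ring
  have e4 : 1 - γ*(β+lam₂) = q - γ*α := by rw [hlam₂, hq]; field_simp; ring
  -- C bounds
  have hCq : q ≤ C := by rw [hC]; exact le_max_right _ _
  have hC0 : 0 < C := lt_of_lt_of_le hq0 hCq
  have hC1 : C < 1 := by
    rw [hC]
    apply max_lt (max_lt ?_ ?_) hq1
    · rw [e1]; linarith
    · rw [e3]; linarith
  refine ⟨hC0, hC1, ⟨_, _, _, _, hUt, hUtilt, hVt, hVtilt⟩, ?_⟩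
  -- x iterates stay in [0, xstar]
  have hposdiv : ∀ t : ℝ, 0 < γ * t → 0 < t := by
    intro t ht
    by_contra h
    push_neg at h
    nlinarith
  have hxb : ∀ k, 0 ≤ x k ∧ x k ≤ xstar :=
    x_bounds f α β η xstar hα hη hηβ hxstar hconv hsmooth hder x hx0 hx
  have hxB : ∀ i, |x i| ≤ xstar := by
    intro i
    obtain ⟨h0, h1⟩ := hxb i
    rw [abs_of_nonneg h0]; exact h1
  have hlipf := lip_of_bounds (deriv f) α β hα.le hconv hsmooth
  have hgb : ∀ i, |deriv f (x i)| ≤ β * xstar := by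
    intro i
    obtain ⟨h0, h1⟩ := hxb i
    have habs : |x i - xstar| ≤ xstar := by
      rw [abs_le]; constructor <;> linarith
    calc |deriv f (x i)| = |deriv f (x i) - deriv f xstar| := by rw [hder, sub_zero]
      _ ≤ β * |x i - xstar| := hlipf _ _
      _ ≤ β * xstar := mul_le_mul_of_nonneg_left habs hβ.le
  -- series identities
  set Xt := ∑' i, (1-q)*q^i * x i with hXt
  set A : ℝ := ∑' i, q^i * x i with hA
  set B : ℝ := ∑' i, q^i * deriv f (x i) with hBdef
  have hsumx : Summable (fun i => q^i * x i) :=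
    geom_mul_summable q hq0.le hq1 x xstar hxB
  have hsumg : Summable (fun i => q^i * deriv f (x i)) :=
    geom_mul_summable q hq0.le hq1 _ (β*xstar) hgb
  have hrec : ∀ k, (∑ i ∈ Finset.range (k+1), q^i * x i) =
      q * (∑ i ∈ Finset.range k, q^i * x i) -
      η*q*(∑ i ∈ Finset.range k, q^i * deriv f (x i)) := by
    intro k
    induction k with
    | zero => simp [hx0]
    | succ n ih =>
      calc ∑ i ∈ Finset.range (n+2), q^i * x i
          = (∑ i ∈ Finset.range (n+1), q^i * x i) + q^(n+1) * x (n+1) :=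
            Finset.sum_range_succ _ _
        _ = (q * (∑ i ∈ Finset.range n, q^i * x i) -
              η*q*(∑ i ∈ Finset.range n, q^i * deriv f (x i))) +
              q^(n+1) * (x n - η * deriv f (x n)) := by rw [ih, hx n]
        _ = q * ((∑ i ∈ Finset.range n, q^i * x i) + q^n * x n) -
              η*q*((∑ i ∈ Finset.range n, q^i * deriv f (x i)) +
                q^n * deriv f (x n)) := by ring
        _ = q * (∑ i ∈ Finset.range (n+1), q^i * x i) -
              η*q*(∑ i ∈ Finset.range (n+1), q^i * deriv f (x i)) := by
            rw [← Finset.sum_range_succ (f := fun i => q^i * x i) (n := n),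
              ← Finset.sum_range_succ (f := fun i => q^i * deriv f (x i)) (n := n)]
  have hAt : Tendsto (fun k => ∑ i ∈ Finset.range k, q^i * x i) atTop (nhds A) :=
    hsumx.hasSum.tendsto_sum_nat
  have hBt : Tendsto (fun k => ∑ i ∈ Finset.range k, q^i * deriv f (x i)) atTop (nhds B) :=
    hsumg.hasSum.tendsto_sum_nat
  have hiden : A = q * A - η*q*B := by
    have hA1 : Tendsto (fun k => ∑ i ∈ Finset.range (k+1), q^i * x i) atTop (nhds A) :=
      hAt.comp (tendsto_add_atTop_nat 1)
    have hRHS : Tendsto (fun k => q * (∑ i ∈ Finset.range k, q^i * x i) -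
        η*q*(∑ i ∈ Finset.range k, q^i * deriv f (x i))) atTop (nhds (q*A - η*q*B)) :=
      (hAt.const_mul q).sub (hBt.const_mul (η*q))
    exact tendsto_nhds_unique ((tendsto_congr hrec).mp hA1) hRHS
  have hγq : γ = q * η := by rw [hq]; field_simp
  have hXtA : Xt = (1-q) * A := by
    rw [hXt, hA, ← tsum_mul_left]
    apply tsum_congr; intro i; ring
  have hXtB : Xt = -(γ * B) := by
    rw [hXtA, hγq]; linear_combination hiden
  set G : ℝ := ∑' i, (1-q)*q^i * deriv f (x i) with hGdef
  have hGB : G = (1-q) * B := by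
    rw [hGdef, hBdef, ← tsum_mul_left]
    apply tsum_congr; intro i; ring
  have hcoef : (1/γ - 1/η) * γ = 1 - q := by rw [hq]; field_simp
  have hGX : G = -((1/γ - 1/η) * Xt) := by
    have h7 : -((1/γ - 1/η) * Xt) = (1/γ-1/η)*γ*B := by rw [hXtB]; ring
    rw [hGB, h7, hcoef]
  -- sandwich bound
  have hWs : Summable (fun i => (1-q)*q^i) :=
    (summable_geometric_of_lt_one hq0.le hq1).mul_left _
  have hW1 : ∑' i, (1-q)*q^i = 1 := by
    rw [tsum_mul_left, tsum_geometric_of_lt_one hq0.le hq1]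
    field_simp
  have hsand : |deriv f Xt - G| ≤ (β - α) * Xt := by
    have := sandwich_tsum (fun i => (1-q)*q^i) x
      (fun i => mul_nonneg (by linarith) (pow_nonneg hq0.le i)) hWs hW1
      (fun i => (hxb i).1) xstar (fun i => (hxb i).2)
      (deriv f) α β hα.le hαβ hconv hsmooth
    exact this
  have hXt0 : 0 ≤ Xt := by
    rw [hXt]
    exact tsum_nonneg (fun i => mul_nonneg
      (mul_nonneg (by linarith) (pow_nonneg hq0.le i)) (hxb i).1)
  -- regularized paths converge
  have hlam1a : 0 < α + lam₁ := hposdiv _ (by linarith only [e1, h1q, mul_pos hγpos hβ])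
  have hlam1b : 0 < β + lam₁ := hposdiv _ (by linarith only [e2, h1q, hγα, mul_pos hγpos hβ])
  have hlam2a : 0 < α + lam₂ := hposdiv _ (by linarith only [e3, h5, hγα0])
  have hlam2b : 0 < β + lam₂ := hposdiv _ (by linarith only [e4, h1q, hγα0])
  have hmono1 : ∀ z w, (α+lam₁)*(z-w)^2 ≤
      ((deriv f z + lam₁*z) - (deriv f w + lam₁*w))*(z-w) := by
    intro z w; linarith only [hconv z w]
  have hsm1 : ∀ z w, ((deriv f z + lam₁*z) - (deriv f w + lam₁*w))*(z-w) ≤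
      (β+lam₁)*(z-w)^2 := by
    intro z w; linarith only [hsmooth z w]
  have hmono2 : ∀ z w, (α+lam₂)*(z-w)^2 ≤
      ((deriv f z + lam₂*z) - (deriv f w + lam₂*w))*(z-w) := by
    intro z w; linarith only [hconv z w]
  have hsm2 : ∀ z w, ((deriv f z + lam₂*z) - (deriv f w + lam₂*w))*(z-w) ≤
      (β+lam₂)*(z-w)^2 := by
    intro z w; linarith only [hsmooth z w]
  have hρ1lt : max |1 - γ*(α+lam₁)| |1 - γ*(β+lam₁)| < 1 := by
    apply max_lt
    · rw [e1, abs_lt]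
      constructor <;> linarith only [hγβq, hq1, hq0, mul_pos hγpos hβ]
    · rw [e2, abs_lt]
      constructor <;> linarith only [h5, hγβq, hq0, hq1, hγα, mul_pos hγpos hβ]
  have hρ2lt : max |1 - γ*(α+lam₂)| |1 - γ*(β+lam₂)| < 1 := by
    apply max_lt
    · rw [e3, abs_lt]
      constructor <;> linarith only [h5, hγα0, hγα, hγβq, hq1, hq0]
    · rw [e4, abs_lt]
      constructor <;> linarith only [hγα, hγβq, hγα0, hq1, hq0]
  obtain ⟨L₁, hL₁t, hL₁0⟩ := contract_path (fun z => deriv f z + lam₁*z)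
    (α+lam₁) (β+lam₁) γ _ hlam1a hγpos hmono1 hsm1
    (le_max_left _ _) (le_max_right _ _) hρ1lt xh₁ (fun k => hxh₁ k)
  obtain ⟨L₂, hL₂t, hL₂0⟩ := contract_path (fun z => deriv f z + lam₂*z)
    (α+lam₂) (β+lam₂) γ _ hlam2a hγpos hmono2 hsm2
    (le_max_left _ _) (le_max_right _ _) hρ2lt xh₂ (fun k => hxh₂ k)
  have hL₁0' : deriv f L₁ + lam₁ * L₁ = 0 := hL₁0
  have hL₂0' : deriv f L₂ + lam₂ * L₂ = 0 := hL₂0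
  -- Xt between L₁ and L₂
  have hφ1 : 0 ≤ deriv f Xt + lam₁ * Xt := by
    have h1 : -((β-α)*Xt) ≤ deriv f Xt - G := (abs_le.mp hsand).1
    have hlam1X : lam₁ * Xt = (1/γ - 1/η)*Xt + (β - α)*Xt := by rw [hlam₁]; ring
    rw [hlam1X]
    linarith only [h1, hGX]
  have hφ2 : deriv f Xt + lam₂ * Xt ≤ 0 := by
    have h1 : deriv f Xt - G ≤ (β-α)*Xt := (abs_le.mp hsand).2
    have hlam2X : lam₂ * Xt = (1/γ - 1/η)*Xt - (β - α)*Xt := by rw [hlam₂]; ring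
    rw [hlam2X]
    linarith only [h1, hGX]
  have hL1le : L₁ ≤ Xt :=
    root_le (fun z => deriv f z + lam₁*z) (α+lam₁) hlam1a hmono1 L₁ Xt hL₁0' hφ1
  have hL2ge : Xt ≤ L₂ :=
    le_root (fun z => deriv f z + lam₂*z) (α+lam₂) hlam2a hmono2 L₂ Xt hL₂0' hφ2
  -- final bound
  refine ⟨L₁, L₂, hL₁t, hL₂t, 2*xstar*(1-q)⁻¹*q + 1, by positivity, ?_⟩
  intro k
  have hxb1 := avg_bound q hq0 hq1 x xstar hxB k
  rw [← hXt] at hxb1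
  have hx2 : xtil k = (1 - q^(k+1))⁻¹ *
      (∑ i ∈ Finset.range (k+1), (1-q)*q^i * x i) := hrw x xtil hxtil k
  have hmid : |Xt - (L₂ + L₁)/2| ≤ |(L₂ - L₁)/2| := by
    have h8 : |Xt - (L₂ + L₁)/2| ≤ (L₂ - L₁)/2 := by
      rw [abs_le]; constructor <;> linarith only [hL1le, hL2ge]
    exact h8.trans (le_abs_self _)
  have hqC : q^k ≤ C^k := pow_le_pow_left₀ hq0.le hCq k
  have hCk : (0:ℝ) ≤ C^k := pow_nonneg hC0.le k
  calc |xtil k - (L₂ + L₁)/2|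
      ≤ |xtil k - Xt| + |Xt - (L₂ + L₁)/2| := abs_sub_le _ _ _
    _ ≤ (2*xstar*(1-q)⁻¹) * q^(k+1) + |(L₂ - L₁)/2| := by
        rw [hx2]
        exact add_le_add hxb1 hmid
    _ ≤ |(L₂ - L₁)/2| + (2*xstar*(1-q)⁻¹*q + 1) * C^k := by
        have h9 : (2*xstar*(1-q)⁻¹) * q^(k+1) = (2*xstar*(1-q)⁻¹*q) * q^k := by ring
        have h10 : (2*xstar*(1-q)⁻¹*q) * q^k ≤ (2*xstar*(1-q)⁻¹*q) * C^k :=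
          mul_le_mul_of_nonneg_left hqC (by positivity)
        have h11 : (2*xstar*(1-q)⁻¹*q) * C^k ≤ (2*xstar*(1-q)⁻¹*q + 1) * C^k := by
          have he : (2*xstar*(1-q)⁻¹*q + 1) * C^k = (2*xstar*(1-q)⁻¹*q)*C^k + C^k := by
            ring
          rw [he]
          exact le_add_of_nonneg_right hCk
        rw [h9, add_comm]
        exact add_le_add_right ((h10.trans h11)) _
end

section
/- Let f: ℝ → ℝ be differentiable, α-strongly convex and β-smooth with 0 < α ≤ β, with minimizer x_* > 0, and set b = −f'(0) (so b > 0). Let 0 < η < 1/β and define the gradient descent path x_{k+1} = x_k − η f'(x_k) with x_0 = 0, together with the linear comparison paths u_{k+1} = u_k − η(α u_k − b) and v_{k+1} = v_k − η(β v_k − b) with u_0 = v_0 = 0. Then for every k ≥ 0: v_k ≤ x_k ≤ u_k, and moreover u_k = η ∑_{i=1}^{k} (1−ηα)^{i−1} b and v_k = η ∑_{i=1}^{k} (1−ηβ)^{i−1} b; in particular u_k and v_k converge (to b/α and b/β respectively) as k → ∞. -/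
/-- The discrete comparison (Gronwall-type) bound in the proof of Theorem 5: the GD
path on a strongly convex and smooth one-dimensional loss is sandwiched between two
linear comparison paths, which have explicit closed forms and converge. -/
theorem gd_comparison_paths
    (f : ℝ → ℝ) (hdiff : Differentiable ℝ f)
    (α β : ℝ) (hα : 0 < α) (hαβ : α ≤ β)
    (hconv : ∀ x y : ℝ, α * (x - y) ^ 2 ≤ (deriv f x - deriv f y) * (x - y))
    (hsmooth : ∀ x y : ℝ, (deriv f x - deriv f y) * (x - y) ≤ β * (x - y) ^ 2)
    (xstar : ℝ) (hmin : ∀ x, f xstar ≤ f x) (hxstar : 0 < xstar)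
    (b : ℝ) (hb : b = -deriv f 0)
    (η : ℝ) (hηpos : 0 < η) (hηub : η < 1 / β)
    (x u v : ℕ → ℝ)
    (hx0 : x 0 = 0) (hx : ∀ k, x (k + 1) = x k - η * deriv f (x k))
    (hu0 : u 0 = 0) (hu : ∀ k, u (k + 1) = u k - η * (α * u k - b))
    (hv0 : v 0 = 0) (hv : ∀ k, v (k + 1) = v k - η * (β * v k - b)) :
    (∀ k, v k ≤ x k ∧ x k ≤ u k) ∧
    (∀ k, u k = η * (∑ i ∈ Finset.range k, (1 - η * α) ^ i) * b ∧
      v k = η * (∑ i ∈ Finset.range k, (1 - η * β) ^ i) * b) ∧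
    Filter.Tendsto u Filter.atTop (nhds (b / α)) ∧
    Filter.Tendsto v Filter.atTop (nhds (b / β)) := by
  have hβ : 0 < β := lt_of_lt_of_le hα hαβ
  have hηβ : η * β < 1 := by
    rw [lt_div_iff₀ hβ] at hηub; linarith
  have hηα : η * α < 1 := lt_of_le_of_lt (by nlinarith) hηβ
  have hd0 : deriv f xstar = 0 := by
    have : IsLocalMin f xstar := Filter.Eventually.of_forall hmin
    exact this.deriv_eq_zero
  have hd : deriv f 0 = -b := by linarith
  have hbpos : 0 < b := by
    have h := hconv 0 xstar
    rw [hd0, hd] at h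
    nlinarith [mul_pos hα (mul_pos hxstar hxstar), mul_pos hxstar hxstar]
  -- gradient bounds for t ≥ 0
  have hlow : ∀ t : ℝ, 0 ≤ t → α * t - b ≤ deriv f t := by
    intro t ht
    rcases ht.eq_or_lt with h | h
    · subst h; simp; linarith
    · have hc := hconv t 0
      rw [hd] at hc
      nlinarith
  have hhigh : ∀ t : ℝ, 0 ≤ t → deriv f t ≤ β * t - b := by
    intro t ht
    rcases ht.eq_or_lt with h | h
    · subst h; linarith
    · have hc := hsmooth t 0
      rw [hd] at hc
      nlinarith
  -- main induction
  have key : ∀ k, 0 ≤ v k ∧ v k ≤ x k ∧ x k ≤ u k := by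
    intro k
    induction k with
    | zero => rw [hx0, hu0, hv0]; norm_num
    | succ k ih =>
      obtain ⟨hv0k, hvx, hxu⟩ := ih
      have hxk : 0 ≤ x k := le_trans hv0k hvx
      have h1 := hlow (x k) hxk
      have h2 := hhigh (x k) hxk
      rw [hx, hu, hv]
      refine ⟨?_, ?_, ?_⟩
      · nlinarith
      · nlinarith
      · nlinarith
  -- closed forms
  have hcf : ∀ k, u k = η * (∑ i ∈ Finset.range k, (1 - η * α) ^ i) * b ∧
      v k = η * (∑ i ∈ Finset.range k, (1 - η * β) ^ i) * b := by
    intro k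
    induction k with
    | zero => simp [hu0, hv0]
    | succ k ih =>
      obtain ⟨ihu, ihv⟩ := ih
      constructor
      · rw [hu, ihu, geom_sum_succ]; ring
      · rw [hv, ihv, geom_sum_succ]; ring
  refine ⟨fun k => ⟨(key k).2.1, (key k).2.2⟩, hcf, ?_, ?_⟩
  · have hr0 : 0 ≤ 1 - η * α := by linarith
    have hr1 : 1 - η * α < 1 := by nlinarith
    have hs := (hasSum_geometric_of_lt_one hr0 hr1).tendsto_sum_nat
    have ht := (hs.const_mul η).mul_const b
    have heq : η * (1 - (1 - η * α))⁻¹ * b = b / α := by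
      have : 1 - (1 - η * α) = η * α := by ring
      rw [this]; field_simp
    rw [heq] at ht
    refine Filter.Tendsto.congr (fun n => ?_) ht
    exact ((hcf n).1).symm
  · have hr0 : 0 ≤ 1 - η * β := by linarith
    have hr1 : 1 - η * β < 1 := by nlinarith
    have hs := (hasSum_geometric_of_lt_one hr0 hr1).tendsto_sum_nat
    have ht := (hs.const_mul η).mul_const b
    have heq : η * (1 - (1 - η * β))⁻¹ * b = b / β := by
      have : 1 - (1 - η * β) = η * β := by ring
      rw [this]; field_simp
    rw [heq] at ht
    refine Filter.Tendsto.congr (fun n => ?_) ht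
    exact ((hcf n).2).symm
end
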